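/- For every natural number m, the set of values r(S) over all LR-strings S of length m equals the set of fractions (2k−1)/2^m for 1 ≤ k ≤ 2^m. -/

import Mathlib

open List

/-- `r`-value of an LR-string (`true` = R, `false` = L):
`r(ε) = 1`, `r(SL) = r(S) - 2^(-|SL|)`, `r(SR) = r(S) + 2^(-|SR|)`. -/
def rval (S : List Bool) : ℚ :=
  1 + ∑ i ∈ Finset.range S.length,
      (if S.getD i false then ((2:ℚ)^(i+1))⁻¹ else -((2:ℚ)^(i+1))⁻¹)

/-- Generalized strings: LR-strings plus the formal symbols `R⁻¹ = inv true`
and `L⁻¹ = inv false`. -/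
inductive Gen where
  | inv : Bool → Gen
  | str : List Bool → Gen
deriving DecidableEq

/-- Left parent: `P_L(ε) = R⁻¹`, `P_L(SL) = P_L(S)`, `P_L(SR) = S`. -/
def PL (S : List Bool) : Gen :=
  match S.reverse.dropWhile (· = false) with
  | [] => Gen.inv true
  | _ :: t => Gen.str t.reverse

/-- Right parent: `P_R(ε) = L⁻¹`, `P_R(SL) = S`, `P_R(SR) = P_R(S)`. -/
def PR (S : List Bool) : Gen :=
  match S.reverse.dropWhile (· = true) with
  | [] => Gen.inv false
  | _ :: t => Gen.str t.reverse

/-- Extension of `r` to generalized strings: `r(R⁻¹) = 0`, `r(L⁻¹) = 2`. -/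
def rg : Gen → ℚ
  | Gen.inv true => 0
  | Gen.inv false => 2
  | Gen.str S => rval S

/-- Length of a generalized string; the formal symbols have length `-1`. -/
def glen : Gen → ℤ
  | Gen.inv _ => -1
  | Gen.str S => S.length

/-- Position function: `N(ε) = 0`, `N(SL) = 2N(S)+1`, `N(SR) = 2N(S)+2`. -/
def posN (S : List Bool) : ℕ :=
  ∑ i ∈ Finset.range S.length, (if S.getD i false then 2 else 1) * 2^(S.length - 1 - i)

/-- The alternating-block string `S(k₀,…,k_m) = R^{k₀} L^{k₁} R^{k₂} ⋯`. -/
def blockStr (ks : List ℕ) : List Bool :=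
  (ks.zipIdx.map (fun p => List.replicate p.1 (decide (p.2 % 2 = 0)))).flatten

/-- Continued fraction `[q₀,…,q_m]`. -/
def cf : List ℚ → ℚ
  | [] => 0
  | [q] => q
  | q :: qs => q + (cf qs)⁻¹

/-- Admissible continued-fraction index sequences: `[q₀]` with `q₀ ≥ 1`, or
`[q₀,…,q_m]` with `m ≥ 1`, intermediate `qᵢ ≥ 1`, and `q_m ≥ 2`. -/
def CFAdmissible (qs : List ℕ) : Prop :=
  qs ≠ [] ∧ (qs.length = 1 → 1 ≤ qs.getD 0 0) ∧
    (∀ i, 1 ≤ i → i + 1 < qs.length → 1 ≤ qs.getD i 0) ∧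
    (2 ≤ qs.length → 2 ≤ qs.getLastD 0)

/-- The map `f([q₀,…,q_m]) = S(q₀,…,q_{m-1},q_m - 1)`. -/
def cfToStr (qs : List ℕ) : List Bool :=
  blockStr (qs.dropLast ++ [qs.getLastD 0 - 1])

/-! Prepending a letter to `S` turns `r(S)` into `r(S)/2` (for `L`) or `1 + r(S)/2` (for `R`).
The odd fractions `(2k-1)/2^(m+1)` split in the same way into halves of the odd fractions of
level `m` (`k ≤ 2^m`) and their translates by `1` (`k > 2^m`). Both families therefore obey the
same recursion, starting from `{1}` at `m = 0`. -/

lemma rval_nil : rval [] = 1 := by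
  simp [rval]

lemma rval_cons (b : Bool) (S : List Bool) :
    rval (b :: S) = (if b then 1 else 0) + rval S / 2 := by
  have halve : ∀ i : ℕ,
      (if S.getD i false then ((2:ℚ) ^ (i + 1 + 1))⁻¹ else -((2:ℚ) ^ (i + 1 + 1))⁻¹) =
        (if S.getD i false then ((2:ℚ) ^ (i + 1))⁻¹ else -((2:ℚ) ^ (i + 1))⁻¹) / 2 := by
    intro i; split <;> ring
  simp only [rval, List.length_cons, Finset.sum_range_succ', List.getD_cons_succ,
    List.getD_cons_zero, halve, ← Finset.sum_div]
  cases b <;> simp <;> ring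

def rvalsOfLength (m : ℕ) : Set ℚ :=
  {x | ∃ S : List Bool, S.length = m ∧ rval S = x}

def oddDyadics (m : ℕ) : Set ℚ :=
  {x | ∃ k : ℕ, 1 ≤ k ∧ k ≤ 2 ^ m ∧ x = (2 * (k : ℚ) - 1) / 2 ^ m}

lemma rvalsOfLength_zero : rvalsOfLength 0 = {1} := by
  ext x
  simp [rvalsOfLength, rval_nil, eq_comm]

lemma oddDyadics_zero : oddDyadics 0 = {1} := by
  ext x
  simp only [oddDyadics, pow_zero, Set.mem_ofPred_eq, Set.mem_singleton_iff]
  constructor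
  · rintro ⟨k, hk1, hk2, rfl⟩
    obtain rfl : k = 1 := le_antisymm hk2 hk1
    norm_num
  · rintro rfl
    exact ⟨1, le_rfl, le_rfl, by norm_num⟩

lemma rvalsOfLength_succ (m : ℕ) :
    rvalsOfLength (m + 1) =
      (fun y => y / 2) '' rvalsOfLength m ∪ (fun y => 1 + y / 2) '' rvalsOfLength m := by
  ext x
  simp only [rvalsOfLength, Set.mem_union, Set.mem_image, Set.mem_ofPred_eq]
  constructor
  · rintro ⟨_ | ⟨b, S⟩, hS, rfl⟩
    · simp at hS
    · have hlen : S.length = m := by simpa using hS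
      cases b
      · exact Or.inl ⟨rval S, ⟨S, hlen, rfl⟩, by simp [rval_cons]⟩
      · exact Or.inr ⟨rval S, ⟨S, hlen, rfl⟩, by simp [rval_cons]⟩
  · rintro (⟨_, ⟨S, hS, rfl⟩, rfl⟩ | ⟨_, ⟨S, hS, rfl⟩, rfl⟩)
    · exact ⟨false :: S, by simp [hS], by simp [rval_cons]⟩
    · exact ⟨true :: S, by simp [hS], by simp [rval_cons]⟩

lemma oddDyadics_succ (m : ℕ) :
    oddDyadics (m + 1) =
      (fun y => y / 2) '' oddDyadics m ∪ (fun y => 1 + y / 2) '' oddDyadics m := by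
  ext x
  simp only [oddDyadics, Set.mem_union, Set.mem_image, Set.mem_ofPred_eq]
  constructor
  · rintro ⟨k, hk1, hk2, rfl⟩
    by_cases hk : k ≤ 2 ^ m
    · exact Or.inl ⟨_, ⟨k, hk1, hk, rfl⟩, by field_simp; ring⟩
    · obtain ⟨j, rfl⟩ : ∃ j, k = j + 2 ^ m := ⟨k - 2 ^ m, by omega⟩
      refine Or.inr ⟨_, ⟨j, by omega, by rw [pow_succ] at hk2; omega, rfl⟩, ?_⟩
      push_cast
      field_simp
      ring
  · rintro (⟨_, ⟨k, hk1, hk2, rfl⟩, rfl⟩ | ⟨_, ⟨k, hk1, hk2, rfl⟩, rfl⟩)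
    · exact ⟨k, hk1, by rw [pow_succ]; omega, by field_simp; ring⟩
    · refine ⟨k + 2 ^ m, by omega, by rw [pow_succ]; omega, ?_⟩
      push_cast
      field_simp
      ring

theorem rvalsOfLength_eq_oddDyadics (m : ℕ) : rvalsOfLength m = oddDyadics m := by
  induction m with
  | zero => rw [rvalsOfLength_zero, oddDyadics_zero]
  | succ m ih => rw [rvalsOfLength_succ, oddDyadics_succ, ih]

/-- Theorem 2.2(a): the `r`-values of strings of length `m` are exactly the
fractions `(2k-1)/2^m` for `1 ≤ k ≤ 2^m`. -/
theorem stmt0 (m : ℕ) :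
    {x : ℚ | ∃ S : List Bool, S.length = m ∧ rval S = x} =
      {x : ℚ | ∃ k : ℕ, 1 ≤ k ∧ k ≤ 2 ^ m ∧ x = (2 * (k : ℚ) - 1) / 2 ^ m} :=
  rvalsOfLength_eq_oddDyadics m
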